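/- For fixed s ∈ [0,T] and Δ > 0, the unique minimizer of L(l) = (1/(2α))∫ₛᵀ lₜ² dt + (1/(2Λ))∫ₛᵀ (∫ₜᵀ lᵤ du)² dt + ((s∧Δ)/(2Λ))(1 - ∫ₛᵀ lᵤ du)² over l ∈ L²([s,T]) is l̂ₜ = ρ(s∧Δ)·cosh(√ρ(T-t)) / (cosh(√ρ(T-s)) + √ρ(s∧Δ)·sinh(√ρ(T-s))), and the minimum value equals (1/(2Λ))·(s∧Δ)/(1 + (s∧Δ)√ρ·tanh(√ρ(T-s))). -/

import Mathlib

/-!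
The cost is a quadratic functional of `l`. The candidate `l̂` satisfies the Euler–Lagrange
equation `(1/α) l̂(u) + (1/Λ) ∫ₛᵘ ∫ₜᵀ l̂ = ((s∧Δ)/Λ) (1 - ∫ₛᵀ l̂)` on `[s, T]`. Exchanging the order
of integration, `∫ₛᵀ g(t) ∫ₜᵀ h = ∫ₛᵀ (∫ₛᵘ g) h(u)`, this equation says exactly that the cross
term in the expansion of `L(l̂ + h)` vanishes, so `L(l̂ + h) = L(l̂) + Q(h)` with
`Q(h) ≥ (1/(2α)) ∫ₛᵀ h²`. This gives minimality and a.e. uniqueness; testing the same identity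
against `h = l̂` gives `L(l̂) = ((s∧Δ)/(2Λ)) (1 - ∫ₛᵀ l̂)`, which evaluates to the stated value.
-/

open Real MeasureTheory Set

theorem integral_mul_integral_tail_swap {s T : ℝ} (hsT : s ≤ T) {f g : ℝ → ℝ}
    (hf : IntervalIntegrable f volume s T) (hg : IntervalIntegrable g volume s T) :
    ∫ t in s..T, g t * ∫ u in t..T, f u = ∫ u in s..T, (∫ t in s..u, g t) * f u := by
  set μ := volume.restrict (Ioc s T)
  have hfμ : Integrable f μ := (intervalIntegrable_iff_integrableOn_Ioc_of_le hsT).1 hf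
  have hgμ : Integrable g μ := (intervalIntegrable_iff_integrableOn_Ioc_of_le hsT).1 hg
  set F : ℝ → ℝ → ℝ := fun t u =>
    {q : ℝ × ℝ | q.1 ≤ q.2}.indicator (fun q => g q.1 * f q.2) (t, u)
  have hF : Integrable (Function.uncurry F) (μ.prod μ) :=
    (hgμ.mul_prod hfμ).indicator (measurableSet_le measurable_fst measurable_snd)
  have inner_left : ∀ t ∈ Ioc s T, ∫ u, F t u ∂μ = g t * ∫ u in t..T, f u := by
    intro t ht
    have hset : Ici t ∩ Ioc s T = Icc t T := by
      ext u; simp only [mem_inter_iff, mem_Ici, mem_Ioc, mem_Icc]; grind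
    change ∫ u, (Ici t).indicator (fun u => g t * f u) u ∂μ = _
    rw [integral_indicator measurableSet_Ici, Measure.restrict_restrict measurableSet_Ici, hset,
      integral_const_mul, setIntegral_congr_set Ioc_ae_eq_Icc.symm,
      intervalIntegral.integral_of_le ht.2]
  have inner_right : ∀ u ∈ Ioc s T, ∫ t, F t u ∂μ = (∫ t in s..u, g t) * f u := by
    intro u hu
    have hset : Iic u ∩ Ioc s T = Ioc s u := by
      ext t; simp only [mem_inter_iff, mem_Iic, mem_Ioc]; grind
    change ∫ t, (Iic u).indicator (fun t => g t * f u) t ∂μ = _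
    rw [integral_indicator measurableSet_Iic, Measure.restrict_restrict measurableSet_Iic, hset,
      integral_mul_const, intervalIntegral.integral_of_le hu.1.le]
  calc ∫ t in s..T, g t * ∫ u in t..T, f u = ∫ t, ∫ u, F t u ∂μ ∂μ := by
        rw [intervalIntegral.integral_of_le hsT]
        exact (setIntegral_congr_fun measurableSet_Ioc inner_left).symm
    _ = ∫ u, ∫ t, F t u ∂μ ∂μ := integral_integral_swap hF
    _ = ∫ u in s..T, (∫ t in s..u, g t) * f u := by
        rw [intervalIntegral.integral_of_le hsT]
        exact setIntegral_congr_fun measurableSet_Ioc inner_right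

theorem Continuous.memLp_restrict_Icc {E : Type*} [NormedAddCommGroup E] {φ : ℝ → E}
    (hφ : Continuous φ) (p : ENNReal) (s T : ℝ) : MemLp φ p (volume.restrict (Icc s T)) := by
  obtain ⟨C, hC⟩ := isCompact_Icc.exists_bound_of_continuousOn hφ.continuousOn
  exact MemLp.of_bound hφ.aestronglyMeasurable.restrict C
    ((ae_restrict_mem measurableSet_Icc).mono hC)

theorem continuous_integral_tail {φ : ℝ → ℝ} (hφ : Continuous φ) (T : ℝ) :
    Continuous fun t => ∫ u in t..T, φ u := by
  simp_rw [intervalIntegral.integral_symm T]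
  exact (intervalIntegral.continuous_primitive hφ.intervalIntegrable T).neg

theorem intervalIntegral.integral_add_sq {a b : ℝ} {f g : ℝ → ℝ}
    (hf : IntervalIntegrable (fun t => f t ^ 2) volume a b)
    (hfg : IntervalIntegrable (fun t => f t * g t) volume a b)
    (hg : IntervalIntegrable (fun t => g t ^ 2) volume a b) :
    ∫ t in a..b, (f t + g t) ^ 2
      = (∫ t in a..b, f t ^ 2) + 2 * (∫ t in a..b, f t * g t) + ∫ t in a..b, g t ^ 2 := by
  simp_rw [add_sq, mul_assoc]
  rw [intervalIntegral.integral_add (hf.add (hfg.const_mul 2)) hg,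
    intervalIntegral.integral_add hf (hfg.const_mul 2), intervalIntegral.integral_const_mul]

section QuadraticCost

variable (a b c s T : ℝ)

noncomputable def quadraticCost (l : ℝ → ℝ) : ℝ :=
  a * (∫ t in s..T, l t ^ 2) + b * (∫ t in s..T, (∫ u in t..T, l u) ^ 2)
    + c * (1 - ∫ u in s..T, l u) ^ 2

noncomputable def quadraticPart (h : ℝ → ℝ) : ℝ :=
  a * (∫ t in s..T, h t ^ 2) + b * (∫ t in s..T, (∫ u in t..T, h u) ^ 2)
    + c * (∫ u in s..T, h u) ^ 2

/-- Vanishing of the first variation of `quadraticCost` at `φ` (halved), in the pointwise form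
obtained after exchanging the order of integration in its `b`-term. -/
def EulerLagrange (φ : ℝ → ℝ) : Prop :=
  ∀ u ∈ Icc s T,
    a * φ u + b * ∫ t in s..u, ∫ v in t..T, φ v = c * (1 - ∫ v in s..T, φ v)

variable {a b c s T}

theorem EulerLagrange.integral_mul_eq {φ h : ℝ → ℝ} (hEL : EulerLagrange a b c s T φ)
    (hφ : Continuous φ) (hsT : s ≤ T) (hh : IntervalIntegrable h volume s T) :
    a * (∫ t in s..T, φ t * h t) + b * (∫ t in s..T, (∫ u in t..T, φ u) * ∫ u in t..T, h u)
      = c * (1 - ∫ u in s..T, φ u) * ∫ u in s..T, h u := by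
  have hF := continuous_integral_tail hφ T
  have hΦ : ContinuousOn (fun u => ∫ t in s..u, ∫ v in t..T, φ v) (uIcc s T) :=
    (intervalIntegral.continuous_primitive hF.intervalIntegrable s).continuousOn
  rw [integral_mul_integral_tail_swap hsT hh (hF.intervalIntegrable s T),
    ← intervalIntegral.integral_const_mul, ← intervalIntegral.integral_const_mul,
    ← intervalIntegral.integral_add, ← intervalIntegral.integral_const_mul]
  · refine intervalIntegral.integral_congr fun u hu => ?_
    rw [uIcc_of_le hsT] at hu
    simp only [← hEL u hu]
    ring
  · exact (hh.continuousOn_mul hφ.continuousOn).const_mul a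
  · exact (hh.continuousOn_mul hΦ).const_mul b

theorem EulerLagrange.quadraticCost_eq {φ l : ℝ → ℝ} (hEL : EulerLagrange a b c s T φ)
    (hφ : Continuous φ) (hsT : s ≤ T) (hl : MemLp l 2 (volume.restrict (Icc s T))) :
    quadraticCost a b c s T l = quadraticCost a b c s T φ + quadraticPart a b c s T (l - φ) := by
  set h := l - φ
  have hIcc : Icc s T = uIcc s T := (uIcc_of_le hsT).symm
  have hh_mem : MemLp h 2 (volume.restrict (Icc s T)) := hl.sub (hφ.memLp_restrict_Icc 2 s T)
  have hh_on : IntegrableOn h (uIcc s T) := hIcc ▸ hh_mem.integrable one_le_two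
  have hh : IntervalIntegrable h volume s T := hh_on.intervalIntegrable
  have hh2 : IntervalIntegrable (fun t => h t ^ 2) volume s T :=
    IntegrableOn.intervalIntegrable (hIcc ▸ hh_mem.integrable_sq)
  have hl_eq : ∀ t ∈ uIcc s T, ∫ u in t..T, l u = (∫ u in t..T, φ u) + ∫ u in t..T, h u := by
    intro t ht
    rw [← intervalIntegral.integral_add (hφ.intervalIntegrable t T) (hh.mono_set ?_)]
    · simp [h]
    · exact uIcc_subset_uIcc_right ht
  have hF := continuous_integral_tail hφ T
  have hH : ContinuousOn (fun t => ∫ u in t..T, h u) (uIcc s T) :=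
    intervalIntegral.continuousOn_primitive_interval_left hh_on
  have hsq : ∫ t in s..T, l t ^ 2
      = (∫ t in s..T, φ t ^ 2) + 2 * (∫ t in s..T, φ t * h t) + ∫ t in s..T, h t ^ 2 := by
    rw [← intervalIntegral.integral_add_sq ((hφ.pow 2).intervalIntegrable s T)
      (hh.continuousOn_mul hφ.continuousOn) hh2]
    simp [h]
  have htail_sq : ∫ t in s..T, (∫ u in t..T, l u) ^ 2
      = (∫ t in s..T, (∫ u in t..T, φ u) ^ 2)
        + 2 * (∫ t in s..T, (∫ u in t..T, φ u) * ∫ u in t..T, h u)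
        + ∫ t in s..T, (∫ u in t..T, h u) ^ 2 := by
    rw [← intervalIntegral.integral_add_sq ((hF.pow 2).intervalIntegrable s T)
      ((hF.continuousOn.mul hH).intervalIntegrable) (hH.pow 2).intervalIntegrable]
    exact intervalIntegral.integral_congr fun t ht => by simp only [hl_eq t ht]
  have hcross := hEL.integral_mul_eq hφ hsT hh
  rw [quadraticCost, quadraticCost, quadraticPart, hsq, htail_sq, hl_eq s left_mem_uIcc]
  linear_combination 2 * hcross

theorem EulerLagrange.quadraticCost_self {φ : ℝ → ℝ} (hEL : EulerLagrange a b c s T φ)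
    (hφ : Continuous φ) (hsT : s ≤ T) :
    quadraticCost a b c s T φ = c * (1 - ∫ u in s..T, φ u) := by
  have h := hEL.integral_mul_eq hφ hsT (hφ.intervalIntegrable s T)
  simp only [← sq] at h
  rw [quadraticCost]
  linear_combination h

theorem mul_integral_sq_le_quadraticPart (hb : 0 ≤ b) (hc : 0 ≤ c) (hsT : s ≤ T)
    (h : ℝ → ℝ) : a * ∫ t in s..T, h t ^ 2 ≤ quadraticPart a b c s T h := by
  have := intervalIntegral.integral_nonneg (μ := volume) hsT fun t _ =>
    sq_nonneg (∫ u in t..T, h u)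
  rw [quadraticPart, add_assoc]
  exact le_add_of_nonneg_right (by positivity)

theorem quadraticPart_nonneg (ha : 0 ≤ a) (hb : 0 ≤ b) (hc : 0 ≤ c) (hsT : s ≤ T)
    (h : ℝ → ℝ) : 0 ≤ quadraticPart a b c s T h :=
  (mul_nonneg ha (intervalIntegral.integral_nonneg hsT fun t _ => sq_nonneg (h t))).trans
    (mul_integral_sq_le_quadraticPart hb hc hsT h)

theorem ae_eq_zero_of_quadraticPart_eq_zero (ha : 0 < a) (hb : 0 ≤ b) (hc : 0 ≤ c)
    (hsT : s ≤ T) {h : ℝ → ℝ} (hh : MemLp h 2 (volume.restrict (Icc s T)))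
    (h0 : quadraticPart a b c s T h = 0) : h =ᵐ[volume.restrict (Icc s T)] 0 := by
  have hle := h0 ▸ mul_integral_sq_le_quadraticPart hb hc hsT h
  have hge := mul_nonneg ha.le (intervalIntegral.integral_nonneg (μ := volume) hsT
    fun t _ => sq_nonneg (h t))
  have hsq : ∫ t in s..T, h t ^ 2 = 0 :=
    (mul_eq_zero.1 (le_antisymm hle hge)).resolve_left ha.ne'
  rw [intervalIntegral.integral_eq_zero_iff_of_le_of_nonneg_ae hsT
    (Filter.Eventually.of_forall fun t => sq_nonneg (h t))
      ((intervalIntegrable_iff_integrableOn_Icc_of_le hsT).2 hh.integrable_sq),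
    Measure.restrict_congr_set Ioc_ae_eq_Icc] at hsq
  filter_upwards [hsq] with t ht
  exact pow_eq_zero_iff two_ne_zero |>.mp ht

theorem EulerLagrange.quadraticCost_le {φ l : ℝ → ℝ} (hEL : EulerLagrange a b c s T φ)
    (hφ : Continuous φ) (hsT : s ≤ T) (ha : 0 ≤ a) (hb : 0 ≤ b) (hc : 0 ≤ c)
    (hl : MemLp l 2 (volume.restrict (Icc s T))) :
    quadraticCost a b c s T φ ≤ quadraticCost a b c s T l := by
  rw [hEL.quadraticCost_eq hφ hsT hl]
  exact le_add_of_nonneg_right (quadraticPart_nonneg ha hb hc hsT _)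

theorem EulerLagrange.ae_eq_of_quadraticCost_eq {φ l : ℝ → ℝ} (hEL : EulerLagrange a b c s T φ)
    (hφ : Continuous φ) (hsT : s ≤ T) (ha : 0 < a) (hb : 0 ≤ b) (hc : 0 ≤ c)
    (hl : MemLp l 2 (volume.restrict (Icc s T)))
    (hcost : quadraticCost a b c s T l = quadraticCost a b c s T φ) :
    l =ᵐ[volume.restrict (Icc s T)] φ := by
  rw [hEL.quadraticCost_eq hφ hsT hl, add_eq_left] at hcost
  filter_upwards [ae_eq_zero_of_quadraticPart_eq_zero ha hb hc hsT
    (hl.sub (hφ.memLp_restrict_Icc 2 s T)) hcost] with t ht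
  exact sub_eq_zero.mp ht

end QuadraticCost

theorem integral_cosh_mul_sub {r : ℝ} (hr : r ≠ 0) (T a b : ℝ) :
    ∫ u in a..b, cosh (r * (T - u)) = (sinh (r * (T - a)) - sinh (r * (T - b))) / r := by
  have hderiv : ∀ u, HasDerivAt (fun u => -sinh (r * (T - u)) / r) (cosh (r * (T - u))) u :=
    fun u => by
      have := ((((hasDerivAt_id' u).const_sub T).const_mul r).sinh.neg).div_const r
      exact this.congr_deriv (by field_simp)
  rw [intervalIntegral.integral_eq_sub_of_hasDerivAt (fun u _ => hderiv u)
    ((by fun_prop : Continuous fun u => cosh (r * (T - u))).intervalIntegrable a b)]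
  ring

theorem integral_sinh_mul_sub {r : ℝ} (hr : r ≠ 0) (T a b : ℝ) :
    ∫ u in a..b, sinh (r * (T - u)) = (cosh (r * (T - a)) - cosh (r * (T - b))) / r := by
  have hderiv : ∀ u, HasDerivAt (fun u => -cosh (r * (T - u)) / r) (sinh (r * (T - u))) u :=
    fun u => by
      have := ((((hasDerivAt_id' u).const_sub T).const_mul r).cosh.neg).div_const r
      exact this.congr_deriv (by field_simp)
  rw [intervalIntegral.integral_eq_sub_of_hasDerivAt (fun u _ => hderiv u)
    ((by fun_prop : Continuous fun u => sinh (r * (T - u))).intervalIntegrable a b)]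
  ring

noncomputable def coshProfile (ρ m s T t : ℝ) : ℝ :=
  ρ * m * cosh (√ρ * (T - t)) / (cosh (√ρ * (T - s)) + √ρ * m * sinh (√ρ * (T - s)))

section CoshProfile

variable {ρ m s T : ℝ}

theorem continuous_coshProfile : Continuous (coshProfile ρ m s T) := by
  unfold coshProfile
  fun_prop

theorem coshProfile_denominator_pos (hm : 0 ≤ m) (hsT : s ≤ T) :
    0 < cosh (√ρ * (T - s)) + √ρ * m * sinh (√ρ * (T - s)) :=
  add_pos_of_pos_of_nonneg (cosh_pos _) (mul_nonneg (mul_nonneg (sqrt_nonneg ρ) hm)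
    (sinh_nonneg_iff.2 (mul_nonneg (sqrt_nonneg ρ) (sub_nonneg.2 hsT))))

theorem coshProfile_eq_mul_cosh :
    coshProfile ρ m s T = fun t => ρ * m / (cosh (√ρ * (T - s)) + √ρ * m * sinh (√ρ * (T - s)))
      * cosh (√ρ * (T - t)) := by
  ext t
  rw [coshProfile, mul_div_right_comm]

theorem integral_coshProfile_tail (hρ : 0 < ρ) (t : ℝ) :
    ∫ u in t..T, coshProfile ρ m s T u
      = √ρ * m * sinh (√ρ * (T - t)) / (cosh (√ρ * (T - s)) + √ρ * m * sinh (√ρ * (T - s))) := by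
  have hr : √ρ ≠ 0 := (sqrt_pos.2 hρ).ne'
  rw [coshProfile_eq_mul_cosh, intervalIntegral.integral_const_mul, integral_cosh_mul_sub hr,
    sub_self, mul_zero, sinh_zero, sub_zero]
  nth_rw 1 [← sq_sqrt hρ.le]
  field_simp

theorem one_sub_integral_coshProfile (hρ : 0 < ρ) (hm : 0 ≤ m) (hsT : s ≤ T) :
    1 - ∫ u in s..T, coshProfile ρ m s T u
      = cosh (√ρ * (T - s)) / (cosh (√ρ * (T - s)) + √ρ * m * sinh (√ρ * (T - s))) := by
  have hD := coshProfile_denominator_pos (ρ := ρ) hm hsT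
  rw [integral_coshProfile_tail hρ]
  field_simp
  ring

theorem eulerLagrange_coshProfile {a b c : ℝ} (hρ : 0 < ρ) (hm : 0 ≤ m) (hsT : s ≤ T)
    (hab : a * ρ = b) (hc : c = m * b) :
    EulerLagrange a b c s T (coshProfile ρ m s T) := by
  intro u _
  have hr : √ρ ≠ 0 := (sqrt_pos.2 hρ).ne'
  have hD := coshProfile_denominator_pos (ρ := ρ) hm hsT
  rw [one_sub_integral_coshProfile hρ hm hsT]
  simp only [integral_coshProfile_tail hρ, mul_div_right_comm _ (sinh _)]
  rw [intervalIntegral.integral_const_mul, integral_sinh_mul_sub hr, coshProfile, hc, ← hab]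
  field_simp
  ring

end CoshProfile

theorem stmt1_general (T α Λ Δ s : ℝ) (hα : 0 < α) (hΛ : 0 < Λ) (hΔ : 0 < Δ)
    (hs : s ∈ Set.Icc (0:ℝ) T) :
    let ρ := α / Λ
    let L : (ℝ → ℝ) → ℝ := fun l =>
      (1 / (2 * α)) * (∫ t in s..T, (l t) ^ 2)
        + (1 / (2 * Λ)) * (∫ t in s..T, (∫ u in t..T, l u) ^ 2)
        + (min s Δ) / (2 * Λ) * (1 - ∫ u in s..T, l u) ^ 2
    let lhat : ℝ → ℝ := fun t =>
      ρ * (min s Δ) * Real.cosh (Real.sqrt ρ * (T - t)) /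
        (Real.cosh (Real.sqrt ρ * (T - s))
          + Real.sqrt ρ * (min s Δ) * Real.sinh (Real.sqrt ρ * (T - s)))
    (L lhat = (1 / (2 * Λ)) * (min s Δ)
        / (1 + (min s Δ) * Real.sqrt ρ * Real.tanh (Real.sqrt ρ * (T - s)))) ∧
    ∀ l : ℝ → ℝ,
      MemLp l 2 (volume.restrict (Set.Icc s T)) →
      (L lhat ≤ L l) ∧
      (L l = L lhat → ∀ᵐ t ∂(volume.restrict (Set.Icc s T)), l t = lhat t) := by
  obtain ⟨hs0, hsT⟩ := hs
  intro ρ L lhat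
  have hρ : 0 < ρ := div_pos hα hΛ
  have hm : 0 ≤ min s Δ := le_min hs0 hΔ.le
  have hEL : EulerLagrange (1 / (2 * α)) (1 / (2 * Λ)) (min s Δ / (2 * Λ)) s T
      (coshProfile ρ (min s Δ) s T) :=
    eulerLagrange_coshProfile hρ hm hsT (by simp only [ρ]; field_simp) (by ring)
  have hlhat : Continuous (coshProfile ρ (min s Δ) s T) := continuous_coshProfile
  have ha : 0 < 1 / (2 * α) := by positivity
  have hb : 0 ≤ 1 / (2 * Λ) := by positivity
  have hc : 0 ≤ min s Δ / (2 * Λ) := by positivity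
  refine ⟨?_, fun l hl => ⟨hEL.quadraticCost_le hlhat hsT ha.le hb hc hl,
    hEL.ae_eq_of_quadraticCost_eq hlhat hsT ha hb hc hl⟩⟩
  have hD := coshProfile_denominator_pos (ρ := ρ) hm hsT
  change quadraticCost _ _ _ s T (coshProfile ρ (min s Δ) s T) = _
  rw [hEL.quadraticCost_self hlhat hsT, one_sub_integral_coshProfile hρ hm hsT,
    tanh_eq_sinh_div_cosh]
  field_simp

/-- For fixed s ∈ [0,T] and Δ > 0, the unique minimizer of
L(l) = (1/(2α))∫ₛᵀ l² + (1/(2Λ))∫ₛᵀ(∫ₜᵀ l)² + ((s∧Δ)/(2Λ))(1-∫ₛᵀ l)² over l ∈ L²([s,T])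
is l̂ₜ = ρ(s∧Δ)cosh(√ρ(T-t))/(cosh(√ρ(T-s)) + √ρ(s∧Δ)sinh(√ρ(T-s))), with minimum value
(1/(2Λ))·(s∧Δ)/(1 + (s∧Δ)√ρ·tanh(√ρ(T-s))). -/
theorem stmt1 (T α Λ Δ s : ℝ) (hT : 0 < T) (hα : 0 < α) (hΛ : 0 < Λ) (hΔ : 0 < Δ)
    (hs : s ∈ Set.Icc (0:ℝ) T) :
    let ρ := α / Λ
    let L : (ℝ → ℝ) → ℝ := fun l =>
      (1 / (2 * α)) * (∫ t in s..T, (l t) ^ 2)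
        + (1 / (2 * Λ)) * (∫ t in s..T, (∫ u in t..T, l u) ^ 2)
        + (min s Δ) / (2 * Λ) * (1 - ∫ u in s..T, l u) ^ 2
    let lhat : ℝ → ℝ := fun t =>
      ρ * (min s Δ) * Real.cosh (Real.sqrt ρ * (T - t)) /
        (Real.cosh (Real.sqrt ρ * (T - s))
          + Real.sqrt ρ * (min s Δ) * Real.sinh (Real.sqrt ρ * (T - s)))
    (L lhat = (1 / (2 * Λ)) * (min s Δ)
        / (1 + (min s Δ) * Real.sqrt ρ * Real.tanh (Real.sqrt ρ * (T - s)))) ∧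
    ∀ l : ℝ → ℝ,
      MemLp l 2 (volume.restrict (Set.Icc s T)) →
      (L lhat ≤ L l) ∧
      (L l = L lhat → ∀ᵐ t ∂(volume.restrict (Set.Icc s T)), l t = lhat t) :=
  stmt1_general T α Λ Δ s hα hΛ hΔ hs
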